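/- For coprime integers a, b with b ≥ 1 and a coprime to b, if 3 does not divide b, then 3 divides inv(a,b). -/

import Mathlib

/-- The sawtooth function ((x)): 0 if x is an integer, else x - ⌊x⌋ - 1/2. -/
def sawtooth (x : ℚ) : ℚ := if x.den = 1 then 0 else x - ⌊x⌋ - 1/2

/-- The Dedekind sum s(a,b) = ∑_{i=1}^{b-1} (i/b)·((a·i/b)). -/
def dedekindSum (a b : ℕ) : ℚ :=
  ∑ i ∈ Finset.Icc 1 (b - 1), (i : ℚ) / (b : ℚ) * sawtooth ((a * i : ℕ) / (b : ℚ))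

/-- Representative of a·x mod b in {1, ..., b}. -/
def modRep (a b x : ℕ) : ℕ := if a * x % b = 0 then b else a * x % b

/-- inv(a,b): number of pairs 1 ≤ i < j ≤ b with a·i mod b > a·j mod b
(representatives in {1,...,b}). -/
def invNum (a b : ℕ) : ℕ :=
  ((Finset.Icc 1 b ×ˢ Finset.Icc 1 b).filter
    (fun p => p.1 < p.2 ∧ modRep a b p.2 < modRep a b p.1)).card

/-!
For an inversion `(i, j)` (necessarily `0 < i < j < b`) cut `b` into the three gaps `i`, `j - i`,
`b - j`. Their residues `r x = a * x % b` lie in `[1, b - 1]` by coprimality and sum to a multiple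
of `b`, hence to `b` or `2 * b`; the pair is an inversion exactly when the sum is `2 * b`, i.e. when
`r i + r (j - i)` carries past `b`. This criterion is invariant under rotating the gaps,
`(i, j) ↦ (j - i, b - i)`, a map of order 3 on the inversions whose fixed points would have
`b = 3 * i`. So the inversions fall into orbits of size 3.
-/

theorem Finset.prime_dvd_card_of_iterate_eq_self {α : Type*} {p : ℕ} [Fact p.Prime]
    {s : Finset α} {f : α → α} (hmaps : Set.MapsTo f s s) (hper : ∀ x ∈ s, f^[p] x = x)
    (hfree : ∀ x ∈ s, f x ≠ x) : p ∣ s.card := by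
  classical
  let g : Function.End s := hmaps.restrict
  have hg : g ^ p ^ 1 = 1 := by
    rw [pow_one, hom_coe_pow (fun g : Function.End s ↦ g) rfl (fun _ _ ↦ rfl) g p]
    funext x
    exact Subtype.ext ((hmaps.coe_iterate_restrict x p).trans (hper x x.2))
  have hfix : Fintype.card g.fixedPoints = 0 :=
    Fintype.card_eq_zero_iff.mpr ⟨fun x ↦ hfree x.1 x.1.2 (congrArg Subtype.val x.2)⟩
  simpa [hfix, Nat.modEq_zero_iff_dvd] using Equiv.Perm.card_fixedPoints_modEq hg

namespace Nat.Coprime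

variable {a b x : ℕ}

theorem mul_mod_ne_zero (h : a.Coprime b) (hx : 0 < x) (hxb : x < b) : a * x % b ≠ 0 := by
  intro h0
  have hbx : b ∣ x := h.symm.dvd_mul_left.mp (Nat.dvd_of_mod_eq_zero h0)
  exact hx.ne' (Nat.eq_zero_of_dvd_of_lt hbx hxb)

theorem modRep_eq (h : a.Coprime b) (hx : 0 < x) (hxb : x < b) :
    modRep a b x = a * x % b :=
  if_neg (h.mul_mod_ne_zero hx hxb)

end Nat.Coprime

theorem modRep_self (a b : ℕ) : modRep a b b = b := by
  simp [modRep]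

theorem modRep_le {a b : ℕ} (hb : 0 < b) (x : ℕ) : modRep a b x ≤ b := by
  unfold modRep
  split_ifs
  exacts [le_rfl, (Nat.mod_lt _ hb).le]

def inversions (a b : ℕ) : Finset (ℕ × ℕ) :=
  (Finset.Icc 1 b ×ˢ Finset.Icc 1 b).filter
    (fun p => p.1 < p.2 ∧ modRep a b p.2 < modRep a b p.1)

theorem invNum_eq_card_inversions (a b : ℕ) : invNum a b = (inversions a b).card := rfl

theorem mem_inversions_iff {a b : ℕ} (h : a.Coprime b) {p : ℕ × ℕ} :
    p ∈ inversions a b ↔ 0 < p.1 ∧ p.1 < p.2 ∧ p.2 < b ∧ a * p.2 % b < a * p.1 % b := by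
  obtain ⟨i, j⟩ := p
  simp only [inversions, Finset.mem_filter, Finset.mem_product, Finset.mem_Icc]
  constructor
  · rintro ⟨⟨⟨hi, -⟩, -, hj⟩, hij, hinv⟩
    have hjb : j < b := by
      refine hj.lt_of_ne fun hjb ↦ ?_
      have := modRep_le (a := a) (b := b) (by omega) i
      rw [hjb, modRep_self] at hinv
      omega
    rw [h.modRep_eq (by omega) hjb, h.modRep_eq hi (by omega)] at hinv
    exact ⟨hi, hij, hjb, hinv⟩
  · rintro ⟨hi, hij, hjb, hinv⟩
    rw [← h.modRep_eq (by omega) hjb, ← h.modRep_eq hi (by omega)] at hinv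
    exact ⟨⟨⟨hi, by omega⟩, by omega, by omega⟩, hij, hinv⟩

theorem mul_mod_lt_iff_gap_sum {a b i j : ℕ} (h : a.Coprime b) (hi : 0 < i) (hij : i < j)
    (hjb : j < b) :
    a * j % b < a * i % b ↔ a * i % b + a * (j - i) % b + a * (b - j) % b = 2 * b := by
  have carry₁ := Nat.add_mod_add_ite (a * i) (a * (j - i)) b
  have carry₂ := Nat.add_mod_add_ite (a * j) (a * (b - j)) b
  rw [← mul_add, Nat.add_sub_cancel' hij.le] at carry₁
  rw [← mul_add, Nat.add_sub_cancel' hjb.le, Nat.mul_mod_left] at carry₂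
  have hrj := h.mul_mod_ne_zero (x := j) (by omega) hjb
  have hrbj := h.mul_mod_ne_zero (x := b - j) (by omega) (by omega)
  have hb : 0 < b := by omega
  have := Nat.mod_lt (a * i) hb
  have := Nat.mod_lt (a * (j - i)) hb
  have := Nat.mod_lt (a * j) hb
  have := Nat.mod_lt (a * (b - j)) hb
  split_ifs at carry₁ carry₂ <;> omega

def rotateGaps (b : ℕ) (p : ℕ × ℕ) : ℕ × ℕ := (p.2 - p.1, b - p.1)

theorem mapsTo_rotateGaps_inversions {a b : ℕ} (h : a.Coprime b) :
    Set.MapsTo (rotateGaps b) (inversions a b) (inversions a b) := by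
  rintro ⟨i, j⟩ hp
  simp only [Finset.mem_coe, mem_inversions_iff h, rotateGaps] at hp ⊢
  obtain ⟨hi, hij, hjb, hinv⟩ := hp
  rw [mul_mod_lt_iff_gap_sum h hi hij hjb] at hinv
  rw [mul_mod_lt_iff_gap_sum h (by omega) (by omega) (by omega),
    show b - i - (j - i) = b - j by omega, show b - (b - i) = i by omega]
  exact ⟨by omega, by omega, by omega, by omega⟩

theorem rotateGaps_iterate_three {b : ℕ} {p : ℕ × ℕ} (h₁ : p.1 ≤ p.2) (h₂ : p.2 ≤ b) :
    (rotateGaps b)^[3] p = p := by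
  obtain ⟨i, j⟩ := p
  simp only [Function.iterate_succ, Function.iterate_zero, Function.comp_apply, id_eq, rotateGaps,
    Prod.mk.injEq]
  omega

theorem rotateGaps_ne_self {b : ℕ} (hb : ¬ 3 ∣ b) (p : ℕ × ℕ) : rotateGaps b p ≠ p := by
  obtain ⟨i, j⟩ := p
  simp only [rotateGaps, ne_eq, Prod.mk.injEq]
  omega

theorem stmt6_general (a b : ℕ) (h : Nat.Coprime a b) (h3 : ¬ (3 ∣ b)) :
    3 ∣ invNum a b := by
  rw [invNum_eq_card_inversions]
  refine Finset.prime_dvd_card_of_iterate_eq_self (mapsTo_rotateGaps_inversions h)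
    (fun p hp ↦ ?_) (fun p _ ↦ rotateGaps_ne_self h3 p)
  obtain ⟨-, hij, hjb, -⟩ := (mem_inversions_iff h).mp hp
  exact rotateGaps_iterate_three hij.le hjb.le

theorem stmt6 (a b : ℕ) (hb : 1 ≤ b) (h : Nat.Coprime a b) (h3 : ¬ (3 ∣ b)) :
    3 ∣ invNum a b :=
  stmt6_general a b h h3
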